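/- Let λ > 0, let s ≥ 1 be an integer, let c > 0 be real, and let η ∈ ℂ with |η| < 1. Define the harmonic polynomial p_3(z) = z + conj(η · Σ_{n=0}^s C(s,n) · ((s−n+1)_n/(c)_n) · z^{n+2}), where C(s,n) is the binomial coefficient and (x)_m the Pochhammer symbol. If (c+s²+2s−1)·Γ(c)·Γ(c+2s) < λ·(c+2s−1)·(Γ(c+s))², then p_3 belongs to Ω_H^0(λ). -/

import Mathlib

open Complex

noncomputable section

/-- The open unit disk in the complex plane. -/
def unitDisk : Set ℂ := {z : ℂ | ‖z‖ < 1}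

/-- The class `Ω_H^0(λ)` of harmonic mappings `f = h + conj ∘ g`. -/
def OmegaH0 (lam : ℝ) (h g : ℂ → ℂ) : Prop :=
  AnalyticOnNhd ℂ h unitDisk ∧ AnalyticOnNhd ℂ g unitDisk ∧
    h 0 = 0 ∧ deriv h 0 = 1 ∧ g 0 = 0 ∧ deriv g 0 = 0 ∧
    ∀ z ∈ unitDisk,
      ‖h z - z * deriv h z‖ < lam - ‖g z - z * deriv g z‖

/-- The Pochhammer symbol \`(x)_n = x (x+1) ⋯ (x+n-1)\`. -/
def poch (x : ℝ) (n : ℕ) : ℝ := ∏ k ∈ Finset.range n, (x + k)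

lemma poch_zero (x : ℝ) : poch x 0 = 1 := by simp [poch]

lemma poch_succ (x : ℝ) (n : ℕ) : poch x (n + 1) = poch x n * (x + n) := by
  simp [poch, Finset.prod_range_succ]

lemma poch_succ' (x : ℝ) (n : ℕ) : poch x (n + 1) = x * poch (x + 1) n := by
  rw [poch, Finset.prod_range_succ', mul_comm]
  congr 1
  · simp
  · rw [poch]
    apply Finset.prod_congr rfl
    intro k _
    push_cast; ring

lemma poch_pos {x : ℝ} (hx : 0 < x) (n : ℕ) : 0 < poch x n := by
  apply Finset.prod_pos
  intro k _
  positivity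

lemma poch_add (x : ℝ) (m n : ℕ) : poch x (m + n) = poch x m * poch (x + m) n := by
  rw [poch, Finset.prod_range_add]
  congr 1
  apply Finset.prod_congr rfl
  intro k _
  push_cast; ring

/-- Chu–Vandermonde in Pochhammer form. -/
lemma GV (a : ℕ) : ∀ (b : ℕ) (d : ℝ),
    ∑ n ∈ Finset.range (b + 1),
      (a.choose n : ℝ) * (b.choose n) * (n.factorial) * poch (d + n) (b - n)
      = poch (d + a) b := by
  induction a with
  | zero =>
    intro b d
    rw [Finset.sum_eq_single 0]
    · simp
    · intro n _ hn
      rcases Nat.exists_eq_succ_of_ne_zero hn with ⟨m, rfl⟩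
      simp [Nat.choose_eq_zero_of_lt (Nat.succ_pos m)]
    · simp
  | succ a ih =>
    intro b d
    rcases b with _ | b
    · simp [poch]
    · rw [Finset.sum_range_succ']
      have key : ∀ m ∈ Finset.range (b + 1),
          ((a + 1).choose (m + 1) : ℝ) * ((b + 1).choose (m + 1)) * ((m + 1).factorial) *
              poch (d + (↑(m + 1) : ℝ)) ((b + 1) - (m + 1))
            = (a.choose (m + 1) : ℝ) * ((b + 1).choose (m + 1)) * ((m + 1).factorial) *
                poch (d + (↑(m + 1) : ℝ)) ((b + 1) - (m + 1))
              + ((b : ℝ) + 1) *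
                ((a.choose m : ℝ) * (b.choose m) * (m.factorial) * poch ((d + 1) + m) (b - m)) := by
        intro m hm
        have hp : poch (d + (↑(m + 1) : ℝ)) ((b + 1) - (m + 1)) = poch ((d + 1) + m) (b - m) := by
          rw [Nat.succ_sub_succ]
          congr 1
          push_cast; ring
        have hcn : ((b : ℝ) + 1) * (b.choose m) = ((b + 1).choose (m + 1)) * ((m : ℝ) + 1) := by
          exact_mod_cast congrArg (Nat.cast : ℕ → ℝ) (Nat.add_one_mul_choose_eq b m)
        have hc : (((b + 1).choose (m + 1) : ℝ)) * ((m + 1).factorial : ℕ)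
            = ((b : ℝ) + 1) * (b.choose m) * (m.factorial) := by
          rw [Nat.factorial_succ]
          push_cast
          linear_combination (-(m.factorial : ℝ)) * hcn
        rw [hp, Nat.choose_succ_succ a m]
        push_cast
        linear_combination (a.choose m : ℝ) * poch ((d + 1) + m) (b - m) * hc
      rw [Finset.sum_congr rfl key, Finset.sum_add_distrib]
      have h2 : ∑ m ∈ Finset.range (b + 1),
          ((b : ℝ) + 1) *
            ((a.choose m : ℝ) * (b.choose m) * (m.factorial) * poch ((d + 1) + m) (b - m))
          = ((b : ℝ) + 1) * poch ((d + 1) + a) b := by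
        rw [← Finset.mul_sum, ih b (d + 1)]
      rw [h2]
      have h1 := ih (b + 1) d
      rw [Finset.sum_range_succ'] at h1
      simp only [Nat.choose_zero_right] at h1 ⊢
      rw [add_right_comm, h1]
      have e1 : poch (d + a) (b + 1) = (d + a) * poch (d + a + 1) b := poch_succ' _ _
      have e2 : poch (d + (↑(a + 1) : ℝ)) (b + 1) = poch (d + a + 1) b * (d + a + 1 + b) := by
        push_cast
        rw [show d + ((a : ℝ) + 1) = (d + a + 1) from by ring, poch_succ]
      rw [e1, e2, show (d + 1) + (a : ℝ) = d + a + 1 from by ring]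
      ring

lemma poch_desc {s n : ℕ} (h : n ≤ s) :
    poch ((s : ℝ) - n + 1) n = (s.descFactorial n : ℝ) := by
  rw [poch, ← Finset.prod_range_reflect, Nat.descFactorial_eq_prod_range, Nat.cast_prod]
  apply Finset.prod_congr rfl
  intro j hj
  have hj' : j + 1 ≤ n := Finset.mem_range.1 hj
  rw [Nat.sub_sub, Nat.cast_sub (by omega : 1 + j ≤ n), Nat.cast_sub (by omega : j ≤ s)]
  push_cast
  ring

/-- The weighted Chu–Vandermonde identity. -/
lemma L6 (s' : ℕ) (c : ℝ) :
    ∑ n ∈ Finset.range (s' + 1 + 1),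
      ((n : ℝ) + 1) * (((s' + 1).choose n : ℝ) * ((s' + 1).choose n) * n.factorial) *
        poch (c + n) ((s' + 1) - n)
      = poch (c + ((s' : ℝ) + 1)) (s' + 1) + ((s' : ℝ) + 1) ^ 2 * poch (c + ((s' : ℝ) + 1)) s' := by
  have hsplit : ∀ n ∈ Finset.range (s' + 1 + 1),
      ((n : ℝ) + 1) * (((s' + 1).choose n : ℝ) * ((s' + 1).choose n) * n.factorial) *
          poch (c + n) ((s' + 1) - n)
        = ((s' + 1).choose n : ℝ) * ((s' + 1).choose n) * n.factorial * poch (c + n) ((s' + 1) - n)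
          + (n : ℝ) * (((s' + 1).choose n : ℝ) * ((s' + 1).choose n) * n.factorial) *
              poch (c + n) ((s' + 1) - n) := by
    intro n _; ring
  rw [Finset.sum_congr rfl hsplit, Finset.sum_add_distrib, GV (s' + 1) (s' + 1) c]
  have h3 : ∑ n ∈ Finset.range (s' + 1 + 1),
      (n : ℝ) * (((s' + 1).choose n : ℝ) * ((s' + 1).choose n) * n.factorial) *
        poch (c + n) ((s' + 1) - n)
      = ((s' : ℝ) + 1) ^ 2 * poch ((c + 1) + s') s' := by
    rw [Finset.sum_range_succ']
    have key : ∀ m ∈ Finset.range (s' + 1),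
        ((↑(m + 1) : ℝ)) * (((s' + 1).choose (m + 1) : ℝ) * ((s' + 1).choose (m + 1)) *
            (m + 1).factorial) * poch (c + (↑(m + 1) : ℝ)) ((s' + 1) - (m + 1))
          = ((s' : ℝ) + 1) ^ 2 *
            ((s'.choose m : ℝ) * (s'.choose m) * m.factorial * poch ((c + 1) + m) (s' - m)) := by
      intro m hm
      have hp : poch (c + (↑(m + 1) : ℝ)) ((s' + 1) - (m + 1)) = poch ((c + 1) + m) (s' - m) := by
        rw [Nat.succ_sub_succ]
        congr 1
        push_cast; ring
      have hcn : ((s' : ℝ) + 1) * (s'.choose m) = ((s' + 1).choose (m + 1)) * ((m : ℝ) + 1) := by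
        exact_mod_cast congrArg (Nat.cast : ℕ → ℝ) (Nat.add_one_mul_choose_eq s' m)
      rw [hp, Nat.factorial_succ]
      push_cast
      linear_combination (-((m.factorial : ℝ) * poch ((c + 1) + m) (s' - m) *
        (((m : ℝ) + 1) * ((s' + 1).choose (m + 1)) + ((s' : ℝ) + 1) * (s'.choose m)))) * hcn
    rw [Finset.sum_congr rfl key, ← Finset.mul_sum, GV s' s' (c + 1)]
    simp
  rw [h3, show (c + 1) + (s' : ℝ) = c + ((s' : ℝ) + 1) from by ring]
  congr 2
  push_cast
  ring

lemma Gamma_poch (c : ℝ) (hc : 0 < c) (n : ℕ) :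
    Real.Gamma (c + n) = poch c n * Real.Gamma c := by
  induction n with
  | zero => simp [poch_zero]
  | succ n ih =>
    push_cast
    rw [show c + ((n : ℝ) + 1) = (c + n) + 1 from by ring,
      Real.Gamma_add_one (by positivity), ih, poch_succ]
    ring

/-- The key coefficient inequality. -/
lemma sum_lt (lam c : ℝ) (hc : 0 < c) (s : ℕ) (hs : 1 ≤ s)
    (hcond : (c + (s : ℝ) ^ 2 + 2 * s - 1) * Real.Gamma c * Real.Gamma (c + 2 * s) <
      lam * (c + 2 * s - 1) * Real.Gamma (c + s) ^ 2) :
    ∑ n ∈ Finset.range (s + 1),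
      ((n : ℝ) + 1) * ((s.choose n : ℝ) * poch ((s : ℝ) - n + 1) n / poch c n) < lam := by
  obtain ⟨s', rfl⟩ : ∃ s', s = s' + 1 := ⟨s - 1, by omega⟩
  set P : ℝ := poch c (s' + 1) with hPdef
  set Q : ℝ := poch (c + ((s' : ℝ) + 1)) (s' + 1) with hQdef
  set R : ℝ := poch (c + ((s' : ℝ) + 1)) s' with hRdef
  set D : ℝ := c + 2 * ((s' + 1 : ℕ) : ℝ) - 1 with hDdef
  have hbase : (0 : ℝ) < c + ((s' : ℝ) + 1) := by positivity
  have hP : 0 < P := poch_pos hc _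
  have hQ : 0 < Q := poch_pos hbase _
  have hR : 0 < R := poch_pos hbase _
  have hG : 0 < Real.Gamma c := Real.Gamma_pos_of_pos hc
  have hscast : ((s' + 1 : ℕ) : ℝ) = (s' : ℝ) + 1 := by push_cast; ring
  have hD : 0 < D := by rw [hDdef, hscast]; nlinarith
  -- the sum times P
  have hkey : (∑ n ∈ Finset.range (s' + 1 + 1),
      ((n : ℝ) + 1) * (((s' + 1).choose n : ℝ) * poch (((s' + 1 : ℕ) : ℝ) - n + 1) n / poch c n)) * P
      = Q + ((s' : ℝ) + 1) ^ 2 * R := by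
    rw [Finset.sum_mul]
    have step : ∀ n ∈ Finset.range (s' + 1 + 1),
        ((n : ℝ) + 1) * (((s' + 1).choose n : ℝ) * poch (((s' + 1 : ℕ) : ℝ) - n + 1) n / poch c n) * P
          = ((n : ℝ) + 1) * (((s' + 1).choose n : ℝ) * ((s' + 1).choose n) * n.factorial) *
              poch (c + n) ((s' + 1) - n) := by
      intro n hn
      have hn' : n ≤ s' + 1 := by
        have := Finset.mem_range.1 hn; omega
      have hdesc : poch (((s' + 1 : ℕ) : ℝ) - n + 1) n = ((s' + 1).descFactorial n : ℝ) :=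
        poch_desc hn'
      have hdf : ((s' + 1).descFactorial n : ℝ) = (n.factorial : ℝ) * ((s' + 1).choose n) := by
        exact_mod_cast congrArg (Nat.cast : ℕ → ℝ)
          (Nat.descFactorial_eq_factorial_mul_choose (s' + 1) n)
      have hpadd : P = poch c n * poch (c + n) ((s' + 1) - n) := by
        rw [hPdef, ← poch_add]
        congr 1
        omega
      have hpn : poch c n ≠ 0 := (poch_pos hc n).ne'
      rw [hdesc, hdf, hpadd]
      field_simp
    rw [Finset.sum_congr rfl step, L6 s' c]
  -- relation between Q and R
  have hQR : Q = R * D := by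
    rw [hQdef, hRdef, poch_succ, hDdef]
    push_cast
    ring
  -- Gamma rewrites
  have g2 : Real.Gamma (c + 2 * ((s' + 1 : ℕ) : ℝ)) = (P * Q) * Real.Gamma c := by
    have := Gamma_poch c hc (2 * (s' + 1))
    rw [show ((2 * (s' + 1) : ℕ) : ℝ) = 2 * ((s' + 1 : ℕ) : ℝ) from by push_cast; ring] at this
    rw [this, show 2 * (s' + 1) = (s' + 1) + (s' + 1) from by ring, poch_add, hscast]
  have g1 : Real.Gamma (c + ((s' + 1 : ℕ) : ℝ)) = P * Real.Gamma c := Gamma_poch c hc (s' + 1)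
  set K : ℝ := c + ((s' + 1 : ℕ) : ℝ) ^ 2 + 2 * ((s' + 1 : ℕ) : ℝ) - 1 with hKdef
  have hcond' : K * (P * Q) * Real.Gamma c ^ 2 < lam * D * P ^ 2 * Real.Gamma c ^ 2 := by
    calc K * (P * Q) * Real.Gamma c ^ 2
        = K * Real.Gamma c * ((P * Q) * Real.Gamma c) := by ring
      _ = K * Real.Gamma c * Real.Gamma (c + 2 * ((s' + 1 : ℕ) : ℝ)) := by rw [g2]
      _ < lam * D * Real.Gamma (c + ((s' + 1 : ℕ) : ℝ)) ^ 2 := hcond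
      _ = lam * D * (P * Real.Gamma c) ^ 2 := by rw [g1]
      _ = lam * D * P ^ 2 * Real.Gamma c ^ 2 := by ring
  have hlt : K * Q < lam * D * P := by
    have hpos : (0 : ℝ) < P * Real.Gamma c ^ 2 := by positivity
    apply lt_of_mul_lt_mul_right _ hpos.le
    calc K * Q * (P * Real.Gamma c ^ 2) = K * (P * Q) * Real.Gamma c ^ 2 := by ring
      _ < lam * D * P ^ 2 * Real.Gamma c ^ 2 := hcond'
      _ = lam * D * P * (P * Real.Gamma c ^ 2) := by ring
  have hSPD : (∑ n ∈ Finset.range (s' + 1 + 1),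
      ((n : ℝ) + 1) * (((s' + 1).choose n : ℝ) * poch (((s' + 1 : ℕ) : ℝ) - n + 1) n / poch c n)) *
        (P * D) = K * Q := by
    have hK2 : K = D + ((s' : ℝ) + 1) ^ 2 := by
      rw [hKdef, hDdef, hscast]; ring
    calc (∑ n ∈ Finset.range (s' + 1 + 1),
        ((n : ℝ) + 1) * (((s' + 1).choose n : ℝ) * poch (((s' + 1 : ℕ) : ℝ) - n + 1) n / poch c n)) *
          (P * D)
        = ((∑ n ∈ Finset.range (s' + 1 + 1),
            ((n : ℝ) + 1) * (((s' + 1).choose n : ℝ) * poch (((s' + 1 : ℕ) : ℝ) - n + 1) n /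
              poch c n)) * P) * D := by ring
      _ = (Q + ((s' : ℝ) + 1) ^ 2 * R) * D := by rw [hkey]
      _ = K * Q := by rw [hK2, hQR]; ring
  have hfin : (∑ n ∈ Finset.range (s' + 1 + 1),
      ((n : ℝ) + 1) * (((s' + 1).choose n : ℝ) * poch (((s' + 1 : ℕ) : ℝ) - n + 1) n / poch c n)) *
        (P * D) < lam * (P * D) := by
    rw [hSPD]
    calc K * Q < lam * D * P := hlt
      _ = lam * (P * D) := by ring
  exact lt_of_mul_lt_mul_right hfin (by positivity)

theorem stmt19 (lam : ℝ) (hlam : 0 < lam) (s : ℕ) (hs : 1 ≤ s) (c : ℝ) (hc : 0 < c)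
    (η : ℂ) (hη : ‖η‖ < 1)
    (hcond : (c + (s : ℝ) ^ 2 + 2 * s - 1) * Real.Gamma c * Real.Gamma (c + 2 * s) <
      lam * (c + 2 * s - 1) * Real.Gamma (c + s) ^ 2) :
    OmegaH0 lam (fun z => z)
      (fun z => η * ∑ n ∈ Finset.range (s + 1),
        (((s.choose n : ℝ) * poch ((s : ℝ) - n + 1) n / poch c n : ℝ) : ℂ) *
          z ^ (n + 2)) := by
  set A : ℕ → ℝ := fun n => (s.choose n : ℝ) * poch ((s : ℝ) - n + 1) n / poch c n with hA
  set g : ℂ → ℂ := fun z => η * ∑ n ∈ Finset.range (s + 1), ((A n : ℝ) : ℂ) * z ^ (n + 2) with hg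
  have hAnonneg : ∀ n, n ≤ s → 0 ≤ A n := by
    intro n hn
    apply div_nonneg _ (poch_pos hc n).le
    apply mul_nonneg (Nat.cast_nonneg _)
    apply (poch_pos _ n).le
    have : (n : ℝ) ≤ (s : ℝ) := by exact_mod_cast hn
    linarith
  have hgdiff : Differentiable ℂ g := by
    apply Differentiable.const_mul
    apply Differentiable.fun_sum
    intro n _
    exact (differentiable_pow (n + 2)).const_mul _
  have hder : ∀ z : ℂ, deriv g z
      = η * ∑ n ∈ Finset.range (s + 1), ((A n : ℝ) : ℂ) * (((n : ℂ) + 2) * z ^ (n + 1)) := by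
    intro z
    have H : HasDerivAt g
        (η * ∑ n ∈ Finset.range (s + 1), ((A n : ℝ) : ℂ) * (((n : ℂ) + 2) * z ^ (n + 1))) z := by
      apply HasDerivAt.const_mul
      apply HasDerivAt.fun_sum
      intro n _
      have h1 := (hasDerivAt_pow (n + 2) z).const_mul (((A n : ℝ) : ℂ))
      have h2 : ((A n : ℝ) : ℂ) * (((n + 2 : ℕ) : ℂ) * z ^ (n + 2 - 1))
          = ((A n : ℝ) : ℂ) * (((n : ℂ) + 2) * z ^ (n + 1)) := by
        norm_num
      rw [h2] at h1
      exact h1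
    exact H.deriv
  refine ⟨?_, ?_, ?_, ?_, ?_, ?_, ?_⟩
  · exact fun z _ => analyticAt_id
  · exact fun z _ => hgdiff.analyticAt z
  · rfl
  · simp
  · simp [hg]
  · rw [hder 0]
    simp
  · intro z hz
    have hz1 : ‖z‖ < 1 := hz
    have h0 : (fun w : ℂ => w) z - z * deriv (fun w : ℂ => w) z = 0 := by simp
    rw [h0, norm_zero]
    apply sub_pos.mpr
    -- rewrite the expression
    have hGeq : g z - z * deriv g z
        = η * ∑ n ∈ Finset.range (s + 1),
            ((A n : ℝ) : ℂ) * ((1 - ((n : ℂ) + 2)) * z ^ (n + 2)) := by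
      rw [hder z]
      rw [hg]
      simp only
      rw [Finset.mul_sum, Finset.mul_sum, Finset.mul_sum, Finset.mul_sum, ← Finset.sum_sub_distrib]
      apply Finset.sum_congr rfl
      intro n _
      ring
    rw [hGeq]
    have hbound : ‖η * ∑ n ∈ Finset.range (s + 1),
          ((A n : ℝ) : ℂ) * ((1 - ((n : ℂ) + 2)) * z ^ (n + 2))‖
        ≤ ∑ n ∈ Finset.range (s + 1), ((n : ℝ) + 1) * A n := by
      rw [norm_mul]
      have h1 : ‖∑ n ∈ Finset.range (s + 1),
            ((A n : ℝ) : ℂ) * ((1 - ((n : ℂ) + 2)) * z ^ (n + 2))‖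
          ≤ ∑ n ∈ Finset.range (s + 1), ((n : ℝ) + 1) * A n := by
        refine le_trans (norm_sum_le _ _) (Finset.sum_le_sum ?_)
        intro n hn
        have hn' : n ≤ s := by have := Finset.mem_range.1 hn; omega
        have hAn := hAnonneg n hn'
        rw [norm_mul, norm_mul, norm_pow]
        have e1 : ‖((A n : ℝ) : ℂ)‖ = A n := by
          rw [Complex.norm_real, Real.norm_of_nonneg hAn]
        have e2 : ‖1 - ((n : ℂ) + 2)‖ = (n : ℝ) + 1 := by
          rw [show (1 - ((n : ℂ) + 2)) = -((((n : ℝ) + 1 : ℝ) : ℂ)) from by push_cast; ring,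
            norm_neg, Complex.norm_real, Real.norm_of_nonneg (by positivity)]
        rw [e1, e2]
        calc A n * (((n : ℝ) + 1) * ‖z‖ ^ (n + 2))
            ≤ A n * (((n : ℝ) + 1) * 1) := by
              apply mul_le_mul_of_nonneg_left _ hAn
              apply mul_le_mul_of_nonneg_left _ (by positivity)
              exact pow_le_one₀ (norm_nonneg z) hz1.le
          _ = ((n : ℝ) + 1) * A n := by ring
      calc ‖η‖ * ‖∑ n ∈ Finset.range (s + 1),
            ((A n : ℝ) : ℂ) * ((1 - ((n : ℂ) + 2)) * z ^ (n + 2))‖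
          ≤ 1 * (∑ n ∈ Finset.range (s + 1), ((n : ℝ) + 1) * A n) := by
            apply mul_le_mul hη.le h1 (norm_nonneg _) zero_le_one
        _ = ∑ n ∈ Finset.range (s + 1), ((n : ℝ) + 1) * A n := one_mul _
    exact lt_of_le_of_lt hbound (sum_lt lam c hc s hs hcond)
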